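/- arXiv:2409.04685 — 6 statements merged into one kernel-verified Lean document; each statement's English description precedes it below -/
import Mathlib

section
/- For any two linear orders R, S on a finite set X, SF(R,S) ≤ 2·KT(R,S). -/
abbrev Ranking (X : Type*) [Fintype X] := X ≃ Fin (Fintype.card X)

def KT {X : Type*} [Fintype X] (R S : Ranking X) : ℕ :=
  (Finset.univ.filter (fun p : X × X => R p.1 < R p.2 ∧ S p.2 < S p.1)).card

def SF {X : Type*} [Fintype X] (R S : Ranking X) : ℕ :=
  ∑ a : X, Nat.dist (R a : ℕ) (S a : ℕ)

/-- For any two linear orders `R, S` on a finite set, `SF(R,S) ≤ 2·KT(R,S)`. -/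
theorem stmt_3 (X : Type*) [Fintype X] (R S : Ranking X) :
    SF R S ≤ 2 * KT R S := by
  classical
  -- the set of elements discordant with `a`
  set D : X → Finset X := fun a =>
    Finset.univ.filter (fun b : X => (R a < R b ∧ S b < S a) ∨ (R b < R a ∧ S a < S b))
    with hD
  have card_lt : ∀ (T : Ranking X) (a : X),
      (Finset.univ.filter (fun b : X => T b < T a)).card = (T a : ℕ) := by
    intro T a
    rw [Finset.card_equiv T (t := Finset.Iio (T a)) (by simp)]
    exact Fin.card_Iio _
  have key : ∀ a : X, Nat.dist (R a : ℕ) (S a : ℕ) ≤ (D a).card := by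
    intro a
    set A := Finset.univ.filter (fun b : X => R b < R a) with hA
    set B := Finset.univ.filter (fun b : X => S b < S a) with hB
    have hsub1 : A \ B ⊆ D a := by
      intro b hb
      simp only [hA, hB, hD, Finset.mem_sdiff, Finset.mem_filter, Finset.mem_univ,
        true_and, not_lt] at hb ⊢
      refine Or.inr ⟨hb.1, lt_of_le_of_ne hb.2 ?_⟩
      intro h
      have hba : b = a := S.injective h.symm
      subst hba
      exact absurd hb.1 (lt_irrefl _)
    have hsub2 : B \ A ⊆ D a := by
      intro b hb
      simp only [hA, hB, hD, Finset.mem_sdiff, Finset.mem_filter, Finset.mem_univ,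
        true_and, not_lt] at hb ⊢
      refine Or.inl ⟨lt_of_le_of_ne hb.2 ?_, hb.1⟩
      intro h
      have hba : b = a := R.injective h.symm
      subst hba
      exact absurd hb.1 (lt_irrefl _)
    have h1 : (R a : ℕ) - (S a : ℕ) ≤ (A \ B).card := by
      have := Finset.le_card_sdiff B A
      rwa [hA, hB, card_lt R a, card_lt S a] at this
    have h2 : (S a : ℕ) - (R a : ℕ) ≤ (B \ A).card := by
      have := Finset.le_card_sdiff A B
      rwa [hA, hB, card_lt R a, card_lt S a] at this
    have hdisj : Disjoint (A \ B) (B \ A) := disjoint_sdiff_sdiff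
    calc Nat.dist (R a : ℕ) (S a : ℕ)
        = ((R a : ℕ) - (S a : ℕ)) + ((S a : ℕ) - (R a : ℕ)) := rfl
      _ ≤ (A \ B).card + (B \ A).card := Nat.add_le_add h1 h2
      _ = ((A \ B) ∪ (B \ A)).card := (Finset.card_union_of_disjoint hdisj).symm
      _ ≤ (D a).card := Finset.card_le_card (Finset.union_subset hsub1 hsub2)
  have sumD : ∑ a : X, (D a).card =
      (Finset.univ.filter (fun p : X × X =>
        (R p.1 < R p.2 ∧ S p.2 < S p.1) ∨ (R p.2 < R p.1 ∧ S p.1 < S p.2))).card := by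
    simp only [hD, Finset.card_filter, Fintype.sum_prod_type]
  have split : (Finset.univ.filter (fun p : X × X =>
        (R p.1 < R p.2 ∧ S p.2 < S p.1) ∨ (R p.2 < R p.1 ∧ S p.1 < S p.2))).card
      = 2 * KT R S := by
    rw [Finset.filter_or, Finset.card_union_of_disjoint]
    · have : (Finset.univ.filter (fun p : X × X => R p.2 < R p.1 ∧ S p.1 < S p.2)).card
          = KT R S := by
        rw [KT]
        exact Finset.card_equiv
          (t := Finset.univ.filter (fun p : X × X => R p.1 < R p.2 ∧ S p.2 < S p.1))
          (Equiv.prodComm X X) (by simp [and_comm])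
      rw [this, KT, two_mul]
    · rw [Finset.disjoint_filter]
      rintro p _ ⟨h1, h2⟩ ⟨h3, h4⟩
      exact absurd (h1.trans h3) (lt_irrefl _)
  calc SF R S ≤ ∑ a : X, (D a).card := Finset.sum_le_sum (fun a _ => key a)
    _ = 2 * KT R S := by rw [sumD, split]
end

section
/- Let X be partitioned into nonempty blocks X₁,…,X_j with fixed internal orders, and let R list the blocks in order X₁,…,X_j and R' list them in order X_{⌊j/2⌋+1},…,X_j,X₁,…,X_{⌊j/2⌋}. Then SF(R,R') = 2·(Σ_{i=1}^{⌊j/2⌋}|X_i|)·(Σ_{i=⌊j/2⌋+1}^{j}|X_i|). -/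
lemma rank_eq_card {X : Type*} [Fintype X] (e : Ranking X) (a : X) :
    (e a : ℕ) = (Finset.univ.filter fun b => e b < e a).card := by
  have h1 : (Finset.univ.filter fun b => e b < e a).card
      = (Finset.univ.filter fun k : Fin (Fintype.card X) => k < e a).card := by
    apply Finset.card_bij (fun b _ => e b)
    · intro b hb
      simp only [Finset.mem_filter, Finset.mem_univ, true_and] at hb ⊢
      exact hb
    · intro b _ c _ h; exact e.injective h
    · intro k hk
      simp only [Finset.mem_filter, Finset.mem_univ, true_and] at hk
      exact ⟨e.symm k, by simpa using hk, by simp⟩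
  have h2 : (Finset.univ.filter fun k : Fin (Fintype.card X) => k < e a) = Finset.Iio (e a) := by
    ext k; simp
  rw [h1, h2, Fin.card_Iio]

/-- With `X` partitioned into nonempty blocks `X_1, …, X_j` (via `blk`) with fixed internal
orders, `R` listing the blocks in order `X_1, …, X_j` and `R'` listing them in order
`X_{⌊j/2⌋+1}, …, X_j, X_1, …, X_{⌊j/2⌋}` (same internal orders), one has
`SF(R,R') = 2 · (Σ_{i ≤ ⌊j/2⌋} |X_i|) · (Σ_{i > ⌊j/2⌋} |X_i|)`. -/
theorem stmt_5 (X : Type*) [Fintype X] (j : ℕ) (hj : 1 ≤ j)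
    (blk : X → Fin j) (hne : ∀ i : Fin j, ∃ a, blk a = i)
    (R R' : Ranking X)
    (hint : ∀ a b, blk a = blk b → (R a < R b ↔ R' a < R' b))
    (hR : ∀ a b, blk a < blk b → R a < R b)
    (hR' : ∀ a b, blk a ≠ blk b → (R' a < R' b ↔
      ((blk a : ℕ) + j - j / 2) % j < ((blk b : ℕ) + j - j / 2) % j)) :
    SF R R' =
      2 * ((Finset.univ.filter (fun a : X => (blk a : ℕ) < j / 2)).card *
        (Finset.univ.filter (fun a : X => ¬ (blk a : ℕ) < j / 2)).card) := by
  classical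
  set S1 : Finset X := Finset.univ.filter (fun a : X => (blk a : ℕ) < j / 2) with hS1
  set S2 : Finset X := Finset.univ.filter (fun a : X => ¬ (blk a : ℕ) < j / 2) with hS2
  set m := S1.card
  set n := S2.card
  -- the cyclic shift function on block indices
  have hhalf : j / 2 ≤ j := Nat.div_le_self j 2
  have hf1 : ∀ i : Fin j, (i : ℕ) < j / 2 → ((i : ℕ) + j - j / 2) % j = (i : ℕ) + (j - j / 2) := by
    intro i hi
    have : (i : ℕ) + j - j / 2 = (i : ℕ) + (j - j / 2) := by omega
    rw [this, Nat.mod_eq_of_lt (by omega)]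
  have hf2 : ∀ i : Fin j, ¬ (i : ℕ) < j / 2 → ((i : ℕ) + j - j / 2) % j = (i : ℕ) - j / 2 := by
    intro i hi
    have hi' := i.isLt
    have : (i : ℕ) + j - j / 2 = ((i : ℕ) - j / 2) + j := by omega
    rw [this, Nat.add_mod_right, Nat.mod_eq_of_lt (by omega)]
  -- basic order facts
  have hRle : ∀ a b : X, R b < R a → (blk b : ℕ) ≤ (blk a : ℕ) := by
    intro a b h
    by_contra hc
    exact absurd (hR a b (by exact_mod_cast Nat.lt_of_not_le hc)) (by omega)
  have hRiff : ∀ a b : X, blk a ≠ blk b → (R b < R a ↔ (blk b : ℕ) < (blk a : ℕ)) := by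
    intro a b hab
    constructor
    · intro h
      have := hRle a b h
      have : (blk b : ℕ) ≠ (blk a : ℕ) := fun hc => hab (Fin.ext hc).symm
      omega
    · intro h; exact hR b a (by exact_mod_cast h)
  -- key rank formulas
  have key1 : ∀ a : X, (blk a : ℕ) < j / 2 → (R' a : ℕ) = (R a : ℕ) + n := by
    intro a ha
    rw [rank_eq_card R', rank_eq_card R]
    have hset : (Finset.univ.filter fun b => R' b < R' a)
        = (Finset.univ.filter fun b => R b < R a) ∪ S2 := by
      ext b
      simp only [Finset.mem_filter, Finset.mem_univ, true_and, Finset.mem_union, hS2]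
      by_cases hab : blk b = blk a
      · have hb2 : (blk b : ℕ) < j / 2 := by rw [hab]; exact ha
        rw [← hint b a hab]
        constructor
        · intro h; exact Or.inl h
        · rintro (h | h); exact h; omega
      · rw [hR' b a hab]
        by_cases hb : (blk b : ℕ) < j / 2
        · rw [hf1 _ hb, hf1 _ ha]
          constructor
          · intro h; left; exact (hRiff a b (Ne.symm hab)).mpr (by omega)
          · rintro (h | h)
            · have := (hRiff a b (Ne.symm hab)).mp h; omega
            · omega
        · rw [hf2 _ hb, hf1 _ ha]
          have hb' := (blk b).isLt
          constructor
          · intro _; right; exact hb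
          · intro _; omega
    have hdisj : Disjoint (Finset.univ.filter fun b => R b < R a) S2 := by
      rw [Finset.disjoint_left]
      intro b hb hb2
      simp only [Finset.mem_filter, Finset.mem_univ, true_and, hS2] at hb hb2
      exact hb2 (by have := hRle a b hb; omega)
    rw [hset, Finset.card_union_of_disjoint hdisj]
  have key2 : ∀ a : X, ¬ (blk a : ℕ) < j / 2 → (R a : ℕ) = (R' a : ℕ) + m := by
    intro a ha
    rw [rank_eq_card R', rank_eq_card R]
    have hset : (Finset.univ.filter fun b => R b < R a)
        = (Finset.univ.filter fun b => R' b < R' a) ∪ S1 := by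
      ext b
      simp only [Finset.mem_filter, Finset.mem_univ, true_and, Finset.mem_union, hS1]
      by_cases hab : blk b = blk a
      · have hb2 : ¬ (blk b : ℕ) < j / 2 := by rw [hab]; exact ha
        rw [hint b a hab]
        constructor
        · intro h; exact Or.inl h
        · rintro (h | h); exact h; omega
      · rw [hR' b a hab, hRiff a b (Ne.symm hab)]
        by_cases hb : (blk b : ℕ) < j / 2
        · constructor
          · intro _; right; exact hb
          · intro _; omega
        · rw [hf2 _ hb, hf2 _ ha]
          constructor
          · intro h; left; omega
          · rintro (h | h)
            · omega
            · omega
    have hdisj : Disjoint (Finset.univ.filter fun b => R' b < R' a) S1 := by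
      rw [Finset.disjoint_left]
      intro b hb hb1
      simp only [Finset.mem_filter, Finset.mem_univ, true_and, hS1] at hb hb1
      by_cases hab : blk b = blk a
      · have : ¬ (blk b : ℕ) < j / 2 := by rw [hab]; exact ha
        omega
      · rw [hR' b a hab, hf1 _ hb1, hf2 _ ha] at hb
        omega
    rw [hset, Finset.card_union_of_disjoint hdisj]
  -- sum up
  unfold SF
  rw [← Finset.sum_filter_add_sum_filter_not Finset.univ (fun a : X => (blk a : ℕ) < j / 2)]
  have e1 : ∑ a ∈ S1, Nat.dist (R a : ℕ) (R' a : ℕ) = m * n := by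
    have hc : ∀ a ∈ S1, Nat.dist (R a : ℕ) (R' a : ℕ) = n := by
      intro a ha
      simp only [hS1, Finset.mem_filter, Finset.mem_univ, true_and] at ha
      have := key1 a ha
      simp [Nat.dist]; omega
    rw [Finset.sum_congr rfl hc, Finset.sum_const, smul_eq_mul]
  have e2 : ∑ a ∈ S2, Nat.dist (R a : ℕ) (R' a : ℕ) = n * m := by
    have hc : ∀ a ∈ S2, Nat.dist (R a : ℕ) (R' a : ℕ) = m := by
      intro a ha
      simp only [hS2, Finset.mem_filter, Finset.mem_univ, true_and] at ha
      have := key2 a ha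
      simp [Nat.dist]; omega
    rw [Finset.sum_congr rfl hc, Finset.sum_const, smul_eq_mul]
  rw [show (Finset.univ.filter (fun a : X => (blk a : ℕ) < j / 2)) = S1 from rfl,
    show (Finset.univ.filter (fun a : X => ¬ (blk a : ℕ) < j / 2)) = S2 from rfl]
  rw [e1, e2]; ring
end

section
/- (Cyclic profiles pin down the safe area.) Let n̄ > t ≥ 1, let R'₁,…,R'_k be a k-cyclic preference list on X with k ≥ n̄/t, let A₁ ∪ ⋯ ∪ A_k be an equitable partition of [n̄], and define the profile R ∈ L(X)^{n̄} by R_j = R'_i whenever j ∈ A_i. For i* ∈ [n̄], define safe_{i*}(R) = ∩_{T ⊆ [n̄], |T| = n̄−t, i* ∈ T} unanimity({R_α : α ∈ T}), where unanimity(M) = {S ∈ W_O : for all a,b ∈ X, if a ≻_R b for every R ∈ M then a ≻_S b}. Then safe_{i*}(R) = {R_{i*}} ∩ W_O. -/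
/-- (Cyclic profiles pin down the safe area.)  Let `n̄ > t ≥ 1`, let `R'_1, …, R'_k` be a
`k`-cyclic preference list on `X` (distinct orders, blocks given by `blk`, common
internal block orders `hint`, cyclic block order `hcyc`) with `k ≥ n̄/t`, let
`A_1 ∪ ⋯ ∪ A_k` be an equitable partition of `[n̄]`, and let the profile `R` be given by
`R_q = R'_i` whenever `q ∈ A_i`.  Then for every `i* ∈ [n̄]`,
`safe_{i*}(R) = {R_{i*}} ∩ W_O`, where
`safe_{i*}(R) = ∩_{T ⊆ [n̄], |T| = n̄−t, i* ∈ T} unanimity({R_α : α ∈ T})` and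
`unanimity(M) = {S ∈ W_O : ∀ a b, (∀ R ∈ M, a ≻_R b) → a ≻_S b}`. -/
theorem stmt_12 (X : Type*) [Fintype X]
    (WO : Set (Ranking X))
    (n t k : ℕ) (ht : 1 ≤ t) (htn : t < n)
    (hk : (n : ℚ) / t ≤ k)
    (blk : X → Fin k) (hne : ∀ i : Fin k, ∃ a, blk a = i)
    (R' : Fin k → Ranking X)
    (hdist : Function.Injective R')
    (hint : ∀ j j' : Fin k, ∀ a b, blk a = blk b →
      ((R' j) a < (R' j) b ↔ (R' j') a < (R' j') b))
    (hcyc : ∀ j : Fin k, ∀ a b, blk a ≠ blk b →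
      ((R' j) a < (R' j) b ↔
        ((blk a : ℕ) + k - (j : ℕ)) % k < ((blk b : ℕ) + k - (j : ℕ)) % k))
    (A : Fin k → Finset (Fin n))
    (hpart : ∀ q : Fin n, ∃! i : Fin k, q ∈ A i)
    (heq : ∀ i : Fin k, (A i).card = n / k ∨ (A i).card = (n + k - 1) / k)
    (R : Fin n → Ranking X)
    (hprof : ∀ (i : Fin k) (q : Fin n), q ∈ A i → R q = R' i)
    (istar : Fin n) :
    {S : Ranking X | S ∈ WO ∧
        ∀ T : Finset (Fin n), istar ∈ T → T.card = n - t →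
          ∀ a b : X, (∀ α ∈ T, (R α) a < (R α) b) → S a < S b}
      = {R istar} ∩ WO := by
  -- basic numeric facts
  have hn0 : 0 < n := lt_trans (by omega) htn
  have hk0 : 0 < k := by
    by_contra h
    have hk00 : k = 0 := by omega
    subst hk00
    have h1 : (0:ℚ) < (n:ℚ) / t := by
      apply div_pos
      · exact_mod_cast hn0
      · exact_mod_cast ht
    simp at hk
    linarith
  have hntk : n ≤ t * k := by
    rw [div_le_iff₀ (by exact_mod_cast ht : (0:ℚ) < (t:ℚ))] at hk
    have : (n:ℚ) ≤ (t * k : ℕ) := by push_cast; linarith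
    exact_mod_cast this
  have hcardA : ∀ i : Fin k, (A i).card ≤ t := by
    intro i
    have h2 : (n + k - 1) / k ≤ t := by
      have h3 : n + k - 1 < (t + 1) * k := by
        have : (t+1) * k = t * k + k := by ring
        omega
      have := (Nat.div_lt_iff_lt_mul hk0).mpr h3
      omega
    have h1 : n / k ≤ t := le_trans (Nat.div_le_div_right (by omega)) h2
    rcases heq i with h | h <;> omega
  -- the block of istar
  obtain ⟨i0, hi0, hi0u⟩ := hpart istar
  have hR0 : R istar = R' i0 := hprof i0 istar hi0
  -- modular arithmetic lemmas for positions
  have L0 : ∀ (j x y : Fin k),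
      ((x:ℕ) + k - (j:ℕ)) % k = ((y:ℕ) + k - (j:ℕ)) % k → x = y := by
    intro j x y h
    have hx : (x:ℕ) + k - (j:ℕ) = (x:ℕ) + (k - (j:ℕ)) := by omega
    have hy : (y:ℕ) + k - (j:ℕ) = (y:ℕ) + (k - (j:ℕ)) := by omega
    rw [hx, hy] at h
    have h2 : (x:ℕ) ≡ (y:ℕ) [MOD k] := Nat.ModEq.add_right_cancel' _ h
    have h3 : (x:ℕ) % k = (y:ℕ) % k := h2
    rw [Nat.mod_eq_of_lt x.isLt, Nat.mod_eq_of_lt y.isLt] at h3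
    exact Fin.ext h3
  have Lself : ∀ j : Fin k, ((j:ℕ) + k - (j:ℕ)) % k = 0 := by
    intro j
    have : (j:ℕ) + k - (j:ℕ) = k := by omega
    rw [this, Nat.mod_self]
  have L1 : ∀ (j x : Fin k), ((x:ℕ) + k - (j:ℕ)) % k = 0 → x = j := by
    intro j x h
    exact L0 j x j (by rw [h, Lself])
  -- congruence: position mod k determines value
  have Lcong : ∀ (j x : Fin k), ((x:ℕ) + k - (j:ℕ)) % k ≡ (x:ℕ) + (k - (j:ℕ)) [MOD k] := by
    intro j x
    have hx : (x:ℕ) + k - (j:ℕ) = (x:ℕ) + (k - (j:ℕ)) := by omega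
    rw [hx]
    exact (Nat.mod_modEq _ _)
  -- successor transfer: if β is the block right after α (as seen from i0), then every
  -- order except the one starting at β ranks α-elements before β-elements.
  have L2 : ∀ (α β : Fin k),
      ((β:ℕ) + k - (i0:ℕ)) % k = ((α:ℕ) + k - (i0:ℕ)) % k + 1 →
      ∀ j : Fin k, j ≠ β → ((α:ℕ) + k - (j:ℕ)) % k < ((β:ℕ) + k - (j:ℕ)) % k := by
    intro α β hsucc j hj
    -- derive β ≡ α + 1 [MOD k]
    have hb : ((β:ℕ) + (k - (i0:ℕ))) ≡ ((α:ℕ) + (k - (i0:ℕ))) + 1 [MOD k] := by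
      calc ((β:ℕ) + (k - (i0:ℕ))) ≡ ((β:ℕ) + k - (i0:ℕ)) % k [MOD k] := (Lcong i0 β).symm
        _ = ((α:ℕ) + k - (i0:ℕ)) % k + 1 := hsucc
        _ ≡ ((α:ℕ) + (k - (i0:ℕ))) + 1 [MOD k] := Nat.ModEq.add_right 1 (Lcong i0 α)
    have hb2 : (β:ℕ) ≡ (α:ℕ) + 1 [MOD k] := by
      have := hb
      have h' : ((β:ℕ) + (k - (i0:ℕ))) ≡ (((α:ℕ) + 1) + (k - (i0:ℕ))) [MOD k] := by
        calc ((β:ℕ) + (k - (i0:ℕ))) ≡ ((α:ℕ) + (k - (i0:ℕ))) + 1 [MOD k] := hb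
          _ = ((α:ℕ) + 1) + (k - (i0:ℕ)) := by ring
      exact Nat.ModEq.add_right_cancel' _ h'
    set u := ((α:ℕ) + k - (j:ℕ)) % k with hu
    set v := ((β:ℕ) + k - (j:ℕ)) % k with hv
    have hu_lt : u < k := Nat.mod_lt _ hk0
    have hv_lt : v < k := Nat.mod_lt _ hk0
    have hvc : v ≡ u + 1 [MOD k] := by
      calc v ≡ (β:ℕ) + (k - (j:ℕ)) [MOD k] := Lcong j β
        _ ≡ ((α:ℕ) + 1) + (k - (j:ℕ)) [MOD k] := Nat.ModEq.add_right _ hb2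
        _ = ((α:ℕ) + (k - (j:ℕ))) + 1 := by ring
        _ ≡ u + 1 [MOD k] := Nat.ModEq.add_right 1 (Lcong j α).symm
    by_cases hcase : u + 1 < k
    · have : v = u + 1 := by
        have h1 : v % k = (u + 1) % k := hvc
        rwa [Nat.mod_eq_of_lt hv_lt, Nat.mod_eq_of_lt hcase] at h1
      omega
    · -- u + 1 = k, so v ≡ 0, hence v = 0 and j = β, contradiction
      have hu1 : u + 1 = k := by omega
      have hv0 : v = 0 := by
        have h1 : v % k = (u + 1) % k := hvc
        rw [hu1, Nat.mod_self, Nat.mod_eq_of_lt hv_lt] at h1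
        exact h1
      exact absurd (L1 j β hv0).symm hj
  -- surjectivity of positions
  have L3 : ∀ v : ℕ, v < k → ∃ γ : Fin k, ((γ:ℕ) + k - (i0:ℕ)) % k = v := by
    intro v hv
    refine ⟨⟨(v + (i0:ℕ)) % k, Nat.mod_lt _ hk0⟩, ?_⟩
    show ((v + (i0:ℕ)) % k + k - (i0:ℕ)) % k = v
    have h1 : (v + (i0:ℕ)) % k + k - (i0:ℕ) = (v + (i0:ℕ)) % k + (k - (i0:ℕ)) := by
      have := i0.isLt; omega
    rw [h1, Nat.mod_add_mod]
    have h2 : v + (i0:ℕ) + (k - (i0:ℕ)) = v + k := by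
      have := i0.isLt; omega
    rw [h2, Nat.add_mod_right, Nat.mod_eq_of_lt hv]
  -- main proof
  ext S
  simp only [Set.mem_setOf_eq, Set.mem_inter_iff, Set.mem_singleton_iff]
  constructor
  · rintro ⟨hSW, hsafe⟩
    refine ⟨?_, hSW⟩
    -- Step 1: S respects every comparison of R' i0 with a same-block pair
    have hsame : ∀ a b : X, blk a = blk b → (R' i0) a < (R' i0) b → S a < S b := by
      intro a b hblk hab
      obtain ⟨T, hT1, _, hT3⟩ := Finset.exists_subsuperset_card_eq
        (Finset.subset_univ {istar}) (by simp only [Finset.card_singleton]; omega)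
        (by simp only [Finset.card_univ, Fintype.card_fin]; omega : n - t ≤ (Finset.univ : Finset (Fin n)).card)
      refine hsafe T (hT1 (Finset.mem_singleton_self istar)) hT3 a b ?_
      intro α hα
      obtain ⟨j, hj, _⟩ := hpart α
      rw [hprof j α hj]
      exact (hint i0 j a b hblk).mp hab
    -- Step 2: adjacent-block pairs
    have hadj : ∀ a b : X, blk a ≠ blk b →
        ((blk b:ℕ) + k - (i0:ℕ)) % k = ((blk a:ℕ) + k - (i0:ℕ)) % k + 1 →
        S a < S b := by
      intro a b hblk hsucc
      have hbne : blk b ≠ i0 := by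
        intro e
        rw [e, Lself] at hsucc
        omega
      have histar : istar ∉ A (blk b) := fun h => hbne (hi0u _ h)
      have hcompl : n - t ≤ ((A (blk b))ᶜ : Finset (Fin n)).card := by
        rw [Finset.card_compl]
        have := hcardA (blk b)
        simp only [Fintype.card_fin]
        omega
      obtain ⟨T, hT1, hT2, hT3⟩ := Finset.exists_subsuperset_card_eq
        (show ({istar} : Finset (Fin n)) ⊆ (A (blk b))ᶜ by simpa using histar)
        (by simp; omega) hcompl
      refine hsafe T (hT1 (Finset.mem_singleton_self istar)) hT3 a b ?_
      intro α hα
      obtain ⟨j, hj, _⟩ := hpart α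
      rw [hprof j α hj]
      have hjne : j ≠ blk b := by
        intro e
        have := hT2 hα
        rw [Finset.mem_compl] at this
        exact this (e ▸ hj)
      exact (hcyc j a b hblk).mpr (L2 (blk a) (blk b) hsucc j hjne)
    -- Step 3: chain across blocks
    have hchain : ∀ m : ℕ, ∀ a b : X, blk a ≠ blk b →
        ((blk b:ℕ) + k - (i0:ℕ)) % k = ((blk a:ℕ) + k - (i0:ℕ)) % k + m + 1 →
        S a < S b := by
      intro m
      induction m with
      | zero =>
        intro a b hblk h
        exact hadj a b hblk (by omega)
      | succ m ih =>
        intro a b hblk h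
        have hblt : ((blk b:ℕ) + k - (i0:ℕ)) % k < k := Nat.mod_lt _ hk0
        obtain ⟨γ, hγ⟩ := L3 (((blk a:ℕ) + k - (i0:ℕ)) % k + 1) (by omega)
        obtain ⟨c, hc⟩ := hne γ
        have h1 : blk a ≠ blk c := by
          intro e
          rw [← hc, ← e] at hγ
          omega
        have h2 : blk c ≠ blk b := by
          intro e
          rw [← hc, e] at hγ
          omega
        have step1 : S a < S c := hadj a c h1 (by rw [hc]; exact hγ)
        have step2 : S c < S b := ih c b h2 (by rw [hc, hγ]; omega)
        exact lt_trans step1 step2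
    -- Step 4: S respects all comparisons of R' i0
    have hmono : ∀ a b : X, (R' i0) a < (R' i0) b → S a < S b := by
      intro a b hab
      by_cases hblk : blk a = blk b
      · exact hsame a b hblk hab
      · have hq := (hcyc i0 a b hblk).mp hab
        exact hchain (((blk b:ℕ) + k - (i0:ℕ)) % k - ((blk a:ℕ) + k - (i0:ℕ)) % k - 1)
          a b hblk (by omega)
    -- Step 5: conclude S = R' i0
    have hSeq : S = R' i0 := by
      have hf : StrictMono (fun i => S ((R' i0).symm i)) := by
        intro i j hij
        apply hmono
        simpa using hij
      have hg : StrictMono (id : Fin (Fintype.card X) → Fin (Fintype.card X)) :=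
        strictMono_id
      have hrange : Set.range (fun i => S ((R' i0).symm i)) = Set.range
          (id : Fin (Fintype.card X) → Fin (Fintype.card X)) := by
        have : Function.Surjective (fun i => S ((R' i0).symm i)) :=
          S.surjective.comp (R' i0).symm.surjective
        rw [Set.range_id, Set.range_eq_univ.mpr this]
      have heqf : (fun i => S ((R' i0).symm i)) =
          (id : Fin (Fintype.card X) → Fin (Fintype.card X)) :=
        (hf.range_inj hg).mp hrange
      apply Equiv.ext
      intro a
      have := congrFun heqf ((R' i0) a)
      simpa using this
    rw [hR0, hSeq]
  · rintro ⟨hS1, hSW⟩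
    refine ⟨hSW, ?_⟩
    intro T hT hcard a b hab
    rw [hS1]
    exact hab istar hT
end

section
/- (Cyclic profile forces disagreement, k-set version.) Let n̄ > t ≥ 1 and k < n̄. Suppose F : L(X)^{n̄} → L(X)^{n̄} satisfies (n̄−t)-unanimity, and suppose R ∈ L(X)^{n̄} is a j-cyclic profile built from a j-cyclic preference list with j > k and j ≥ n̄/t via an equitable partition of [n̄]. Then the output F(R) takes more than k distinct values; i.e., F does not satisfy k-set agreement on R. -/
/-- (Cyclic profile forces disagreement, `k`-set version.)  Let `n̄ > t ≥ 1` and `k < n̄`.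
Suppose `F : L(X)^{n̄} → L(X)^{n̄}` satisfies `(n̄−t)`-unanimity, and `R` is a `j`-cyclic
profile built from a `j`-cyclic preference list (distinct orders `R'_1, …, R'_j` with
blocks `blk`, common internal orders, cyclic block order) with `j > k` and `j ≥ n̄/t`,
via an equitable partition `A_1 ∪ ⋯ ∪ A_j` of `[n̄]`.  Then `F(R)` takes more than `k`
distinct values, i.e. `F` does not satisfy `k`-set agreement on `R`. -/
theorem stmt_14 (X : Type*) [Fintype X]
    (n t k j : ℕ) (ht : 1 ≤ t) (htn : t < n) (hkn : k < n) (hjk : k < j)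
    (hj : (n : ℚ) / t ≤ j)
    (F : (Fin n → Ranking X) → Fin n → Ranking X)
    -- `(n̄−t)`-unanimity of `F`:
    (hunan : ∀ (P : Fin n → Ranking X) (a b : X),
      n - t ≤ (Finset.univ.filter (fun i : Fin n => (P i) a < (P i) b)).card →
      ∀ i : Fin n, (P i) a < (P i) b → (F P i) a < (F P i) b)
    -- `j`-cyclic preference list:
    (blk : X → Fin j) (hne : ∀ i : Fin j, ∃ a, blk a = i)
    (R' : Fin j → Ranking X)
    (hdist : Function.Injective R')
    (hint : ∀ s s' : Fin j, ∀ a b, blk a = blk b →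
      ((R' s) a < (R' s) b ↔ (R' s') a < (R' s') b))
    (hcyc : ∀ s : Fin j, ∀ a b, blk a ≠ blk b →
      ((R' s) a < (R' s) b ↔
        ((blk a : ℕ) + j - (s : ℕ)) % j < ((blk b : ℕ) + j - (s : ℕ)) % j))
    -- equitable partition of `[n̄]` and the induced `j`-cyclic profile:
    (A : Fin j → Finset (Fin n))
    (hpart : ∀ q : Fin n, ∃! i : Fin j, q ∈ A i)
    (heq : ∀ i : Fin j, (A i).card = n / j ∨ (A i).card = (n + j - 1) / j)
    (R : Fin n → Ranking X)
    (hprof : ∀ (i : Fin j) (q : Fin n), q ∈ A i → R q = R' i) :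
    ¬ ∃ V : Finset (Ranking X), V.card ≤ k ∧ ∀ i : Fin n, F R i ∈ V := by
  have hj0 : 0 < j := lt_of_le_of_lt (Nat.zero_le k) hjk
  have hn0 : 0 < n := lt_of_le_of_lt (Nat.zero_le t) htn
  -- `n ≤ t * j` from the rational inequality
  have hjt : n ≤ t * j := by
    have ht' : (0:ℚ) < t := by exact_mod_cast ht
    have := (div_le_iff₀ ht').mp hj
    have : (n:ℚ) ≤ (t:ℚ) * j := by linarith
    exact_mod_cast this
  -- block sizes are at most `t`
  have hcardA : ∀ i : Fin j, (A i).card ≤ t := by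
    intro i
    have hceil : (n + j - 1) / j ≤ t := by
      have : (n + j - 1) / j < t + 1 := by
        rw [Nat.div_lt_iff_lt_mul hj0]
        have : t * j + j = (t+1) * j := by ring
        omega
      omega
    have hfl : n / j ≤ (n + j - 1) / j := Nat.div_le_div_right (by omega)
    rcases heq i with h | h <;> omega
  -- helper for mod arithmetic with variable modulus
  have hm2 : ∀ v : ℕ, v < 2 * j → (v % j = v ∧ v < j) ∨ (v % j = v - j ∧ j ≤ v) := by
    intro v hv
    rcases lt_or_ge v j with h | h
    · exact Or.inl ⟨Nat.mod_eq_of_lt h, h⟩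
    · refine Or.inr ⟨?_, h⟩
      rw [Nat.mod_eq_sub_mod h, Nat.mod_eq_of_lt (by omega)]
  -- the block of each coordinate
  set σ : Fin n → Fin j := fun q => (hpart q).choose with hσdef
  have hσ1 : ∀ q, q ∈ A (σ q) := fun q => (hpart q).choose_spec.1
  have hσu : ∀ q i, q ∈ A i → i = σ q := fun q => (hpart q).choose_spec.2
  have hR : ∀ q, R q = R' (σ q) := fun q => hprof _ _ (hσ1 q)
  -- one-step (same block or adjacent block) unanimity consequence
  have hstep : ∀ (q : Fin n) (a b : X), R q a < R q b →
      (blk a = blk b ∨ ((blk b : ℕ) = ((blk a : ℕ) + 1) % j ∧ blk a ≠ blk b)) →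
      F R q a < F R q b := by
    intro q a b hab hcase
    rcases hcase with hbb | ⟨hadj, hne'⟩
    · -- same block: everyone agrees
      have hall : ∀ i : Fin n, R i a < R i b := by
        intro i
        rw [hR i]
        rw [hR q] at hab
        exact (hint (σ q) (σ i) a b hbb).mp hab
      refine hunan R a b ?_ q hab
      have : Finset.univ.filter (fun i : Fin n => (R i) a < (R i) b) = Finset.univ := by
        apply Finset.filter_true_of_mem; intro i _; exact hall i
      rw [this, Finset.card_univ, Fintype.card_fin]; omega
    · -- adjacent blocks: all coordinates outside `A (blk b)` agree
      have hall : ∀ s' : Fin j, s' ≠ blk b → R' s' a < R' s' b := by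
        intro s' hs'
        rw [hcyc s' a b hne']
        have hs'j : (s' : ℕ) < j := s'.is_lt
        have ha1 : (blk a : ℕ) < j := (blk a).is_lt
        have hb1 : (blk b : ℕ) < j := (blk b).is_lt
        have hsne : (s' : ℕ) ≠ (blk b : ℕ) := fun h => hs' (Fin.ext h)
        have e1 := hm2 ((blk a : ℕ) + j - s') (by omega)
        have e2 := hm2 ((blk b : ℕ) + j - s') (by omega)
        have e3 := hm2 ((blk a : ℕ) + 1) (by omega)
        have hane : (blk a : ℕ) ≠ (blk b : ℕ) := fun h => hne' (Fin.ext h)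
        omega
      have hsub : Finset.univ \ A (blk b) ⊆
          Finset.univ.filter (fun i : Fin n => (R i) a < (R i) b) := by
        intro i hi
        rw [Finset.mem_sdiff] at hi
        rw [Finset.mem_filter]
        refine ⟨Finset.mem_univ _, ?_⟩
        rw [hR i]
        apply hall
        intro h
        exact hi.2 (h ▸ hσ1 i)
      have hc1 : n - (A (blk b)).card ≤
          (Finset.univ.filter (fun i : Fin n => (R i) a < (R i) b)).card := by
        calc n - (A (blk b)).card
            = (Finset.univ \ A (blk b)).card := by
              rw [Finset.card_sdiff_of_subset (Finset.subset_univ _), Finset.card_univ,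
                Fintype.card_fin]
          _ ≤ _ := Finset.card_le_card hsub
      have := hcardA (blk b)
      exact hunan R a b (by omega) q hab
  -- the fixed point property: `F R q = R q` for every coordinate
  have hfix : ∀ q : Fin n, F R q = R q := by
    intro q
    set s : Fin j := σ q with hsdef
    set D : X → ℕ := fun e => ((blk e : ℕ) + j - (s : ℕ)) % j with hDdef
    have hD_lt : ∀ e, D e < j := fun e => Nat.mod_lt _ hj0
    have hD_blk : ∀ a b : X, D a = D b → blk a = blk b := by
      intro a b h
      have ha1 : (blk a : ℕ) < j := (blk a).is_lt
      have hb1 : (blk b : ℕ) < j := (blk b).is_lt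
      have hsj : (s : ℕ) < j := s.is_lt
      have e1 := hm2 ((blk a : ℕ) + j - s) (by omega)
      have e2 := hm2 ((blk b : ℕ) + j - s) (by omega)
      simp only [hDdef] at h
      exact Fin.ext (by omega)
    have hblk_D : ∀ a b : X, blk a = blk b → D a = D b := by
      intro a b h; simp only [hDdef, h]
    have hcycq : ∀ a b : X, blk a ≠ blk b → ((R q) a < (R q) b ↔ D a < D b) := by
      intro a b h
      rw [hR q, ← hsdef]
      exact hcyc s a b h
    -- chaining through intermediate blocks
    have hchain : ∀ (c : ℕ) (a b : X), R q a < R q b → D b = D a + c →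
        F R q a < F R q b := by
      intro c
      induction c with
      | zero =>
        intro a b hab hD
        exact hstep q a b hab (Or.inl (hD_blk a b (by omega)))
      | succ c ih =>
        intro a b hab hD
        have ha1 : (blk a : ℕ) < j := (blk a).is_lt
        have hsj : (s : ℕ) < j := s.is_lt
        have hDa := hD_lt a
        have hDb := hD_lt b
        have e1 := hm2 ((blk a : ℕ) + j - s) (by omega)
        have e3 := hm2 ((blk a : ℕ) + 1) (by omega)
        rcases Nat.eq_zero_or_pos c with rfl | hc
        · -- adjacent blocks
          refine hstep q a b hab (Or.inr ⟨?_, ?_⟩)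
          · have hb1 : (blk b : ℕ) < j := (blk b).is_lt
            have e2 := hm2 ((blk b : ℕ) + j - s) (by omega)
            simp only [hDdef] at hD
            omega
          · intro h
            have := hblk_D a b h
            omega
        · -- go through an element of the next block
          obtain ⟨mid, hmid⟩ := hne ⟨((blk a : ℕ) + 1) % j, Nat.mod_lt _ hj0⟩
          have hmidv : (blk mid : ℕ) = ((blk a : ℕ) + 1) % j := by
            rw [hmid]
          have hDmid : D mid = D a + 1 := by
            have hm1 : (blk mid : ℕ) < j := (blk mid).is_lt
            have e4 := hm2 ((blk mid : ℕ) + j - s) (by omega)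
            simp only [hDdef] at *
            omega
          have hblkam : blk a ≠ blk mid := by
            intro h; have := hblk_D a mid h; omega
          have hblkmb : blk mid ≠ blk b := by
            intro h; have := hblk_D mid b h; omega
          have h1 : R q a < R q mid := (hcycq a mid hblkam).mpr (by omega)
          have h2 : R q mid < R q b := (hcycq mid b hblkmb).mpr (by omega)
          exact lt_trans (hstep q a mid h1 (Or.inr ⟨hmidv, hblkam⟩))
            (ih mid b h2 (by omega))
    have hmono : ∀ a b : X, R q a < R q b → F R q a < F R q b := by
      intro a b hab
      have hle : D a ≤ D b := by
        by_cases hblk : blk a = blk b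
        · exact le_of_eq (hblk_D a b hblk)
        · exact le_of_lt ((hcycq a b hblk).mp hab)
      exact hchain (D b - D a) a b hab (by omega)
    -- conclude equality of the two rankings
    have hsm : StrictMono (fun u : Fin (Fintype.card X) => F R q ((R q).symm u)) := by
      intro u v huv
      apply hmono
      simpa using huv
    have hid : (fun u : Fin (Fintype.card X) => F R q ((R q).symm u)) = id := by
      haveI inst : WellFoundedLT (Fin (Fintype.card X)) := inferInstance
      refine (StrictMono.range_inj (β := Fin (Fintype.card X))
        (γ := Fin (Fintype.card X)) hsm strictMono_id).mp ?_
      rw [Set.range_id]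
      exact Set.range_eq_univ.mpr ((R q).symm.trans (F R q)).surjective
    apply Equiv.ext
    intro x
    have := congrFun hid ((R q) x)
    simpa using this
  -- now count the distinct values of `F R`
  rintro ⟨V, hVcard, hVmem⟩
  set S : Finset (Fin j) := Finset.univ.image σ with hSdef
  have hSV : S.image R' ⊆ V := by
    intro v hv
    rw [Finset.mem_image] at hv
    obtain ⟨i, hiS, rfl⟩ := hv
    rw [hSdef, Finset.mem_image] at hiS
    obtain ⟨q, _, rfl⟩ := hiS
    rw [← hR q, ← hfix q]
    exact hVmem q
  have hScard : k < S.card := by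
    rcases le_or_gt j n with hjn | hnj
    · -- every block is nonempty, so `S = univ`
      have : S = Finset.univ := by
        apply Finset.eq_univ_of_forall
        intro i
        have hpos : 0 < (A i).card := by
          have h1 : 1 ≤ n / j := (Nat.one_le_div_iff hj0).mpr hjn
          have h2 : 1 ≤ (n + j - 1) / j := (Nat.one_le_div_iff hj0).mpr (by omega)
          rcases heq i with h | h <;> omega
        obtain ⟨q, hq⟩ := Finset.card_pos.mp hpos
        rw [hSdef, Finset.mem_image]
        exact ⟨q, Finset.mem_univ _, (hσu q i hq).symm⟩
      rw [this, Finset.card_univ, Fintype.card_fin]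
      exact hjk
    · -- blocks have at most one element, so `σ` is injective
      have hinj : Function.Injective σ := by
        intro q1 q2 h
        have hle1 : (A (σ q1)).card ≤ 1 := by
          have h1 : n / j = 0 := Nat.div_eq_of_lt hnj
          have h2 : (n + j - 1) / j ≤ 1 := by
            have : (n + j - 1) / j < 2 := by
              rw [Nat.div_lt_iff_lt_mul hj0]; omega
            omega
          rcases heq (σ q1) with hh | hh <;> omega
        exact Finset.card_le_one.mp hle1 q1 (hσ1 q1) q2 (h ▸ hσ1 q2)
      rw [hSdef, Finset.card_image_of_injective _ hinj, Finset.card_univ,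
        Fintype.card_fin]
      exact hkn
  have : S.card ≤ k := by
    calc S.card = (S.image R').card := (Finset.card_image_of_injective _ hdist).symm
      _ ≤ V.card := Finset.card_le_card hSV
      _ ≤ k := hVcard
  omega
end

section
/- (Cyclic profile forces disagreement, ε-approximate version.) Let n̄ > t ≥ 1 and let d be a metric on L(X). Suppose F : L(X)^{n̄} → L(X)^{n̄} satisfies (n̄−t)-unanimity, and R is a j-cyclic profile with j ≥ n̄/t. Then there exist i, i' ∈ [n̄] with d(F(R)_i, F(R)_{i'}) = diam_d({R_1,…,R_{n̄}}). In particular F cannot satisfy ε-agreement (all pairwise output distances ≤ ε) if ε < diam_d({R_1,…,R_{n̄}}). -/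
private lemma mod2_aux {j : ℕ} (hj : 0 < j) (x : ℕ) (hx : x < 2 * j) :
    ∃ y, x % j = y ∧ ((j ≤ x ∧ y + j = x) ∨ (x < j ∧ y = x)) := by
  rcases le_or_gt j x with h | h
  · refine ⟨x - j, ?_, Or.inl ⟨h, by omega⟩⟩
    rw [Nat.mod_eq_sub_mod h, Nat.mod_eq_of_lt (by omega)]
  · exact ⟨x, Nat.mod_eq_of_lt h, Or.inr ⟨h, rfl⟩⟩

private lemma equiv_eq_of_strictMono {m : ℕ} (g : Fin m ≃ Fin m) (hg : StrictMono g) :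
    ∀ k, g k = k := by
  let e : Fin m ≃o Fin m := ⟨g, by intro a b; exact hg.le_iff_le⟩
  have he : e = OrderIso.refl (Fin m) := Subsingleton.elim _ _
  intro k
  have h2 : e k = k := by rw [he]; rfl
  exact h2


set_option linter.unusedVariables false

private lemma force_agree {X : Type*} [Fintype X] {n t j : ℕ}
    (hj0 : 0 < j)
    (F : (Fin n → Ranking X) → Fin n → Ranking X)
    (hunan : ∀ (P : Fin n → Ranking X) (a b : X),
      n - t ≤ (Finset.univ.filter (fun i : Fin n => (P i) a < (P i) b)).card →
      ∀ i : Fin n, (P i) a < (P i) b → (F P i) a < (F P i) b)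
    (blk : X → Fin j) (hne : ∀ i : Fin j, ∃ a, blk a = i)
    (R' : Fin j → Ranking X)
    (hint : ∀ s s' : Fin j, ∀ a b, blk a = blk b →
      ((R' s) a < (R' s) b ↔ (R' s') a < (R' s') b))
    (hcyc : ∀ s : Fin j, ∀ a b, blk a ≠ blk b →
      ((R' s) a < (R' s) b ↔
        ((blk a : ℕ) + j - (s : ℕ)) % j < ((blk b : ℕ) + j - (s : ℕ)) % j))
    (A : Fin j → Finset (Fin n))
    (hpart : ∀ q : Fin n, ∃! i : Fin j, q ∈ A i)
    (hAcard : ∀ i : Fin j, (A i).card ≤ t)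
    (R : Fin n → Ranking X)
    (hprof : ∀ (i : Fin j) (q : Fin n), q ∈ A i → R q = R' i) :
    ∀ (q : Fin n) (a b : X), (R q) a < (R q) b → (F R q) a < (F R q) b := by
  have hblk : ∀ p : Fin n, ∃ s : Fin j, p ∈ A s ∧ R p = R' s := by
    intro p
    obtain ⟨s, hs, -⟩ := hpart p
    exact ⟨s, hs, hprof s p hs⟩
  intro q a b
  obtain ⟨s, hqs, -⟩ := hpart q
  have hRq : R q = R' s := hprof s q hqs
  have hsv : (s : ℕ) < j := s.isLt
  -- Base case: blocks at cyclic distance 1.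
  have hbase : ∀ a b : X, blk a ≠ blk b →
      ((blk b : ℕ) + j - (blk a : ℕ)) % j = 1 →
      (R q) a < (R q) b → (F R q) a < (F R q) b := by
    intro a b hab hγ hlt
    refine hunan R a b ?_ q hlt
    have hsub : Finset.univ \ A (blk b) ⊆
        Finset.univ.filter (fun i : Fin n => (R i) a < (R i) b) := by
      intro p hp
      rw [Finset.mem_sdiff] at hp
      obtain ⟨sp, hsp, hRp⟩ := hblk p
      have hspne : sp ≠ blk b := by rintro rfl; exact hp.2 hsp
      rw [Finset.mem_filter]
      refine ⟨Finset.mem_univ _, ?_⟩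
      rw [hRp, hcyc sp a b hab]
      have hav : (blk a : ℕ) < j := (blk a).isLt
      have hbv : (blk b : ℕ) < j := (blk b).isLt
      have hpv : (sp : ℕ) < j := sp.isLt
      have hspv : (sp : ℕ) ≠ (blk b : ℕ) := fun h => hspne (Fin.ext h)
      obtain ⟨y1, e1, h1⟩ := mod2_aux hj0 ((blk b : ℕ) + j - (blk a : ℕ)) (by omega)
      obtain ⟨y2, e2, h2⟩ := mod2_aux hj0 ((blk a : ℕ) + j - (sp : ℕ)) (by omega)
      obtain ⟨y3, e3, h3⟩ := mod2_aux hj0 ((blk b : ℕ) + j - (sp : ℕ)) (by omega)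
      rw [e1] at hγ
      rw [e2, e3]
      omega
    have hcard : n - t ≤ (Finset.univ \ A (blk b)).card := by
      rw [Finset.card_sdiff_of_subset (Finset.subset_univ _), Finset.card_univ, Fintype.card_fin]
      have := hAcard (blk b)
      omega
    exact le_trans hcard (Finset.card_le_card hsub)
  -- General cyclic case, by strong induction on the cyclic distance.
  have hcycF : ∀ γ : ℕ, ∀ a b : X, blk a ≠ blk b →
      ((blk b : ℕ) + j - (blk a : ℕ)) % j = γ →
      (R q) a < (R q) b → (F R q) a < (F R q) b := by
    intro γ
    induction γ using Nat.strong_induction_on with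
    | _ γ ih =>
      intro a b hab hγ hlt
      have hav : (blk a : ℕ) < j := (blk a).isLt
      have hbv : (blk b : ℕ) < j := (blk b).isLt
      have hγ0 : γ ≠ 0 := by
        intro h
        subst h
        apply hab
        obtain ⟨y1, e1, h1⟩ := mod2_aux hj0 ((blk b : ℕ) + j - (blk a : ℕ)) (by omega)
        rw [e1] at hγ
        exact Fin.ext (by omega)
      rcases eq_or_lt_of_le (Nat.one_le_iff_ne_zero.mpr hγ0) with h1 | h2
      · exact hbase a b hab (by rw [hγ, ← h1]) hlt
      · have hγj : γ < j := by rw [← hγ]; exact Nat.mod_lt _ hj0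
        obtain ⟨c, hc⟩ := hne ⟨((blk a : ℕ) + 1) % j, Nat.mod_lt _ hj0⟩
        have hcv : (blk c : ℕ) = ((blk a : ℕ) + 1) % j := by rw [hc]
        obtain ⟨yν, eν, hν⟩ := mod2_aux hj0 ((blk a : ℕ) + 1) (by omega)
        obtain ⟨y1, e1, h1'⟩ := mod2_aux hj0 ((blk b : ℕ) + j - (blk a : ℕ)) (by omega)
        rw [e1] at hγ
        rw [eν] at hcv
        have hxab : ((blk a : ℕ) + j - (s : ℕ)) % j < ((blk b : ℕ) + j - (s : ℕ)) % j := by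
          rw [← hcyc s a b hab, ← hRq]; exact hlt
        obtain ⟨y2, e2, h2'⟩ := mod2_aux hj0 ((blk a : ℕ) + j - (s : ℕ)) (by omega)
        obtain ⟨y3, e3, h3'⟩ := mod2_aux hj0 ((blk b : ℕ) + j - (s : ℕ)) (by omega)
        rw [e2, e3] at hxab
        have hac : blk a ≠ blk c := by
          intro h
          have hh := congrArg Fin.val h
          omega
        have hγac : ((blk c : ℕ) + j - (blk a : ℕ)) % j = 1 := by
          obtain ⟨y4, e4, h4⟩ := mod2_aux hj0 ((blk c : ℕ) + j - (blk a : ℕ)) (by omega)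
          rw [e4]; omega
        have hcb : blk c ≠ blk b := by
          intro h
          have hh := congrArg Fin.val h
          omega
        have hγcb : ((blk b : ℕ) + j - (blk c : ℕ)) % j = γ - 1 := by
          obtain ⟨y5, e5, h5⟩ := mod2_aux hj0 ((blk b : ℕ) + j - (blk c : ℕ)) (by omega)
          rw [e5]; omega
        have hltac : (R q) a < (R q) c := by
          rw [hRq, hcyc s a c hac]
          obtain ⟨y6, e6, h6⟩ := mod2_aux hj0 ((blk c : ℕ) + j - (s : ℕ)) (by omega)
          rw [e2, e6]; omega
        have hltcb : (R q) c < (R q) b := by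
          rw [hRq, hcyc s c b hcb]
          obtain ⟨y6, e6, h6⟩ := mod2_aux hj0 ((blk c : ℕ) + j - (s : ℕ)) (by omega)
          rw [e3, e6]; omega
        exact lt_trans (hbase a c hac hγac hltac)
          (ih (γ - 1) (by omega) c b hcb hγcb hltcb)
  intro hlt
  by_cases hab : blk a = blk b
  · refine hunan R a b ?_ q hlt
    have hall : ∀ p : Fin n, (R p) a < (R p) b := by
      intro p
      obtain ⟨sp, hsp, hRp⟩ := hblk p
      rw [hRp, hint sp s a b hab, ← hRq]
      exact hlt
    rw [Finset.filter_true_of_mem (fun p _ => hall p), Finset.card_univ, Fintype.card_fin]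
    omega
  · exact hcycF (((blk b : ℕ) + j - (blk a : ℕ)) % j) a b hab rfl hlt

/-- (Cyclic profile forces disagreement, `ε`-approximate version.)  Let `n̄ > t ≥ 1` and
let `d` be a metric on the linear orders of `X`.  Suppose `F` satisfies
`(n̄−t)`-unanimity and `R` is a `j`-cyclic profile with `j ≥ n̄/t`.  Then there exist
`i, i'` with `d(F(R)_i, F(R)_{i'}) = diam_d({R_1, …, R_{n̄}})`; in particular, for any
`ε` below this diameter, `F` does not satisfy `ε`-agreement on `R`. -/
theorem stmt_15 (X : Type*) [Fintype X]
    (n t j : ℕ) (ht : 1 ≤ t) (htn : t < n)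
    (hj : (n : ℚ) / t ≤ j)
    (d : Ranking X → Ranking X → ℝ)
    (hd0 : ∀ P, d P P = 0)
    (hdpos : ∀ P Q, P ≠ Q → 0 < d P Q)
    (hdsymm : ∀ P Q, d P Q = d Q P)
    (hdtri : ∀ P Q S, d P S ≤ d P Q + d Q S)
    (F : (Fin n → Ranking X) → Fin n → Ranking X)
    (hunan : ∀ (P : Fin n → Ranking X) (a b : X),
      n - t ≤ (Finset.univ.filter (fun i : Fin n => (P i) a < (P i) b)).card →
      ∀ i : Fin n, (P i) a < (P i) b → (F P i) a < (F P i) b)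
    (blk : X → Fin j) (hne : ∀ i : Fin j, ∃ a, blk a = i)
    (R' : Fin j → Ranking X)
    (hdist : Function.Injective R')
    (hint : ∀ s s' : Fin j, ∀ a b, blk a = blk b →
      ((R' s) a < (R' s) b ↔ (R' s') a < (R' s') b))
    (hcyc : ∀ s : Fin j, ∀ a b, blk a ≠ blk b →
      ((R' s) a < (R' s) b ↔
        ((blk a : ℕ) + j - (s : ℕ)) % j < ((blk b : ℕ) + j - (s : ℕ)) % j))
    (A : Fin j → Finset (Fin n))
    (hpart : ∀ q : Fin n, ∃! i : Fin j, q ∈ A i)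
    (heq : ∀ i : Fin j, (A i).card = n / j ∨ (A i).card = (n + j - 1) / j)
    (R : Fin n → Ranking X)
    (hprof : ∀ (i : Fin j) (q : Fin n), q ∈ A i → R q = R' i) :
    ∃ i i' : Fin n,
      (∀ p q : Fin n, d (R p) (R q) ≤ d (F R i) (F R i')) ∧
      (∃ p q : Fin n, d (R p) (R q) = d (F R i) (F R i')) ∧
      ∀ ε : ℝ, ε < d (F R i) (F R i') →
        ¬ ∀ p q : Fin n, d (F R p) (F R q) ≤ ε := by
  classical
  have hnt : n ≤ t * j := by
    have htq : (0 : ℚ) < t := by exact_mod_cast ht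
    have h1 : (n : ℚ) ≤ j * t := (div_le_iff₀ htq).mp hj
    have h2 : (n : ℚ) ≤ ((t * j : ℕ) : ℚ) := by push_cast; linarith
    exact_mod_cast h2
  have hn1 : 1 ≤ n := by omega
  have hj0 : 0 < j := by
    rcases Nat.eq_zero_or_pos j with h | h
    · subst h; simp at hnt; omega
    · exact h
  have hAcard : ∀ i : Fin j, (A i).card ≤ t := by
    intro i
    have h1 : n / j ≤ t := by
      have h := Nat.div_le_div_right (c := j) hnt
      rwa [Nat.mul_div_cancel _ hj0] at h
    have h2 : (n + j - 1) / j ≤ t := by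
      have h3 : (n + j - 1) / j < t + 1 := by
        rw [Nat.div_lt_iff_lt_mul hj0]
        have h4 : (t + 1) * j = t * j + j := by ring
        omega
      omega
    rcases heq i with h | h <;> omega
  have main := force_agree hj0 F hunan blk hne R' hint hcyc A hpart hAcard R hprof
  -- Hence the output equals the input pointwise.
  have hFR : F R = R := by
    funext q
    have hmono : StrictMono (((R q).symm.trans (F R q)) : Fin _ → Fin _) := by
      intro k l hkl
      have h := main q ((R q).symm k) ((R q).symm l) (by simpa using hkl)
      simpa using h
    have hg : ∀ k, ((R q).symm.trans (F R q)) k = k := equiv_eq_of_strictMono _ hmono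
    apply Equiv.ext
    intro a
    have h := hg ((R q) a)
    simpa using h
  -- Pick a diameter-realizing pair.
  obtain ⟨p0, -, hp0⟩ := Finset.exists_max_image (Finset.univ : Finset (Fin n × Fin n))
      (fun p => d (R p.1) (R p.2)) ⟨(⟨0, by omega⟩, ⟨0, by omega⟩), Finset.mem_univ _⟩
  refine ⟨p0.1, p0.2, ?_, ⟨p0.1, p0.2, by rw [hFR]⟩, ?_⟩
  · intro p q'
    rw [hFR]
    exact hp0 (p, q') (Finset.mem_univ _)
  · intro ε hε hall
    exact absurd (hall p0.1 p0.2) (not_le.mpr hε)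
end

section
/- If a map F : W_I^{n̄} → W_O^{n̄} satisfies 0-unanimity, then for every profile R and every index i such that R_i is a linear order, F(R)_i = R_i. Consequently, if |W_I ∩ L(X)| ≥ n̄ and k < n̄, no 0-unanimous F satisfies k-set agreement, and if ε < diam_d(W_I ∩ L(X)), no 0-unanimous F satisfies ε-agreement. -/
/-- A strict linear (total) preference relation: asymmetric and total. -/
def IsStrictLin {X : Type*} (r : X → X → Prop) : Prop :=
  (∀ a b : X, r a b → ¬ r b a) ∧ (∀ a b : X, a ≠ b → r a b ∨ r b a)

/-- If `F : W_I^{n̄} → W_O^{n̄}` satisfies `0`-unanimity (whenever `a ≻_{R_i} b` then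
`a ≻_{F(R)_i} b`), and every member of `W_O` is a strict linear order, then:
(1) for every profile `R` and index `i` with `R_i` a linear order, `F(R)_i = R_i`;
(2) if `W_I` contains at least `n̄` distinct linear orders and `k < n̄`, then `F` fails
`k`-set agreement on some profile; and (3) if some two linear orders in `W_I` are at
distance `> ε`, then `F` fails `ε`-agreement on some profile (for `n̄ ≥ 2`). -/
theorem stmt_19 (X : Type*)
    (WI WO : Set (X → X → Prop))
    (n : ℕ)
    (hWO : ∀ S ∈ WO, IsStrictLin S)
    (F : (Fin n → (X → X → Prop)) → Fin n → (X → X → Prop))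
    (hFO : ∀ R, (∀ i, R i ∈ WI) → ∀ i, F R i ∈ WO)
    (hunan : ∀ R, (∀ i, R i ∈ WI) → ∀ (a b : X) (i : Fin n), R i a b → F R i a b) :
    (∀ R, (∀ i, R i ∈ WI) → ∀ i : Fin n, IsStrictLin (R i) → F R i = R i) ∧
    (∀ k : ℕ, k < n →
      (∃ L : Fin n → (X → X → Prop), Function.Injective L ∧
        ∀ i, L i ∈ WI ∧ IsStrictLin (L i)) →
      ∃ R, (∀ i, R i ∈ WI) ∧
        ¬ ∃ V : Set (X → X → Prop), V.Finite ∧ V.ncard ≤ k ∧ ∀ i, F R i ∈ V) ∧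
    (∀ d : (X → X → Prop) → (X → X → Prop) → ℝ, 2 ≤ n → ∀ ε : ℝ,
      (∃ P Q, P ∈ WI ∧ IsStrictLin P ∧ Q ∈ WI ∧ IsStrictLin Q ∧ ε < d P Q) →
      ∃ R, (∀ i, R i ∈ WI) ∧ ∃ i i' : Fin n, ε < d (F R i) (F R i')) := by
  have key : ∀ R, (∀ i, R i ∈ WI) → ∀ i : Fin n, IsStrictLin (R i) → F R i = R i := by
    intro R hR i hlin
    have hF := hWO _ (hFO R hR i)
    funext a b
    apply propext
    constructor
    · intro h
      by_contra hnot
      rcases eq_or_ne a b with rfl | hab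
      · exact hF.1 a a h h
      · rcases hlin.2 a b hab with h1 | h1
        · exact hnot h1
        · exact hF.1 b a (hunan R hR b a i h1) h
    · exact hunan R hR a b i
  refine ⟨key, ?_, ?_⟩
  · intro k hk ⟨L, hLinj, hL⟩
    refine ⟨L, fun i => (hL i).1, ?_⟩
    rintro ⟨V, hVfin, hVcard, hVmem⟩
    have hFL : ∀ i, F L i = L i := fun i => key L (fun j => (hL j).1) i (hL i).2
    have hsub : Set.range L ⊆ V := by
      rintro _ ⟨i, rfl⟩
      rw [← hFL i]; exact hVmem i
    have : n ≤ V.ncard := by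
      calc n = (Set.range L).ncard := by
              rw [← Nat.card_coe_set_eq, Nat.card_range_of_injective hLinj, Nat.card_eq_fintype_card, Fintype.card_fin]
           _ ≤ V.ncard := Set.ncard_le_ncard hsub hVfin
    omega
  · intro d hn ε ⟨P, Q, hP, hPlin, hQ, hQlin, hd⟩
    haveI : NeZero n := ⟨by omega⟩
    set R : Fin n → (X → X → Prop) := fun i => if i = ⟨0, by omega⟩ then P else Q with hRdef
    have hR : ∀ i, R i ∈ WI := by
      intro i; simp only [hRdef]; split <;> assumption
    have h01 : (⟨1, by omega⟩ : Fin n) ≠ ⟨0, by omega⟩ := by simp [Fin.ext_iff]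
    have hR0 : R ⟨0, by omega⟩ = P := by simp [hRdef]
    have hR1 : R ⟨1, by omega⟩ = Q := by simp [hRdef, h01]
    refine ⟨R, hR, ⟨0, by omega⟩, ⟨1, by omega⟩, ?_⟩
    rw [key R hR _ (by rw [hR0]; exact hPlin), key R hR _ (by rw [hR1]; exact hQlin),
      hR0, hR1]
    exact hd
end
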